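/- Let S have size n ≥ 2 and let Ŝ^± be the set of reduced words of length B over S, so |Ŝ^±| = 2n̂ where n̂ = n(2n−1)^{B−1}. Let A be a λ-large b-automaton over Ŝ (with λ' = λ − 1/(2n) > 0) and let L_A be the set of reduced words over S of length divisible by B whose associated block-words lie in the language of A. Then for every L̂ ≥ 1, L_A contains at least ⌈λ'·2n̂⌉^{L̂−1} words of length B·L̂; consequently the I₀-growth rate of L_A is at least (λ')^{1/B}·(2n−1). -/

import Mathlib

/-! Words of `L_A` are built block by block. An admissible block-word ending with the block `x`
and the letter `z` extends by every block of `σ_x` not starting with `z⁻¹`. At most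
`(2n-1)^(B-1) = 2n̂/(2n)` blocks start with a given letter, so at least `⌈λ'·2n̂⌉` extensions
remain, and there are at least `⌈λ'·2n̂⌉^(L̂-1)` admissible block-words of length `L̂`; flattening
them is injective because all blocks have length `B`. The growth rate follows from
`(λ'^(1/B)·(2n-1))^B = λ'·(2n-1)^B ≤ λ'·2n̂`. -/

/-- Letters over an alphabet of size `n`: a generator index together with a sign. -/
abbrev Letter (n : ℕ) := Fin n × Bool

/-- The formal inverse of a letter. -/
def Letter.inv {n : ℕ} (s : Letter n) : Letter n := (s.1, !s.2)

/-- A word is reduced if no two consecutive letters are mutually inverse. -/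
def Reduced {n : ℕ} (w : List (Letter n)) : Prop :=
  List.Chain' (fun s s' => s' ≠ s.inv) w

/-- The alphabet `Ŝ^±`: reduced words of length `B` over `S`. -/
def HatLetter (n B : ℕ) := {w : List (Letter n) // w.length = B ∧ Reduced w}

/-- A b-automaton over `Ŝ`: a starting set and transition sets of hat-letters. -/
def HatAut (n B : ℕ) := Set (HatLetter n B) × (HatLetter n B → Set (HatLetter n B))

/-- Membership of a word over `Ŝ^±` in the language of a b-automaton over `Ŝ`. -/
def InLang {n B : ℕ} (A : HatAut n B) (w : List (HatLetter n B)) : Prop :=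
  w ≠ [] ∧ (∀ a ∈ w.head?, a ∈ A.1) ∧ List.Chain' (fun s s' => s' ∈ A.2 s) w

/-- A b-automaton over `Ŝ` is `λ`-large if `σ_∅ ≠ ∅` and `|σ_ŝ| ≥ λ·2n̂` for
every `ŝ`, where `n̂ = n(2n-1)^(B-1)`. -/
def IsLarge {n B : ℕ} (lam : ℝ) (A : HatAut n B) : Prop :=
  A.1.Nonempty ∧
    ∀ s : HatLetter n B, lam * (2 * (n * (2 * n - 1) ^ (B - 1))) ≤ (A.2 s).ncard

/-- `L_A`: the set of reduced words over `S` of length divisible by `B` whose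
associated block-words lie in the language of `A`. -/
def LangA {n B : ℕ} (A : HatAut n B) : Set (List (Letter n)) :=
  {w | Reduced w ∧ ∃ wh : List (HatLetter n B),
    InLang A wh ∧ w = (wh.map Subtype.val).flatten}

open Set

instance {n B : ℕ} : Finite (HatLetter n B) :=
  ((List.finite_length_eq _ B).subset fun _ h => h.1).to_subtype

theorem mul_ncard_le_ncard_of_le_ncard_fiber {α β : Type*} {f : α → β} {s : Set α} {t : Set β}
    (hs : s.Finite) (ht : t.Finite) {m : ℕ} (hm : ∀ b ∈ t, m ≤ (s ∩ f ⁻¹' {b}).ncard) :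
    m * t.ncard ≤ s.ncard := by
  classical
  calc m * t.ncard = m * ht.toFinset.card := by rw [ncard_eq_toFinset_card t ht]
    _ ≤ (hs.toFinset.filter (f · ∈ t)).card := by
      refine Finset.mul_card_image_le_card_of_maps_to (f := f) (by simp) m fun b hb => ?_
      have hbt : b ∈ t := by simpa using hb
      rw [← ncard_coe_finset]
      convert hm b hbt using 2
      ext
      simp +contextual [hbt]
    _ ≤ s.ncard := by
      rw [ncard_eq_toFinset_card s hs]
      exact Finset.card_filter_le _ _

theorem uniquelyDecodable_setOf_length_eq {α : Type*} {B : ℕ} (hB : B ≠ 0) :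
    InformationTheory.UniquelyDecodable {w : List α | w.length = B} := by
  intro L₁ L₂ h₁ h₂ h
  induction L₁ generalizing L₂ with
  | nil =>
    cases L₂ with
    | nil => rfl
    | cons w L₂ => simp_all
  | cons w₁ L₁ ih =>
    cases L₂ with
    | nil => simp_all
    | cons w₂ L₂ =>
      simp only [List.mem_cons, forall_eq_or_imp, mem_ofPred_eq, List.flatten_cons] at h₁ h₂ h
      obtain ⟨rfl, hL⟩ := List.append_inj h (h₁.1.trans h₂.1.symm)
      rw [ih L₂ h₁.2 h₂.2 hL]

section ReducedWords

variable {n : ℕ}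

theorem ncard_reduced_head_ne_le (k : ℕ) (f : Letter n) :
    {w : List (Letter n) | w.length = k ∧ Reduced w ∧ w.head? ≠ some f}.ncard ≤
      (2 * n - 1) ^ k := by
  induction k generalizing f with
  | zero =>
    calc _ ≤ ({[]} : Set (List (Letter n))).ncard :=
          ncard_le_ncard fun w hw => by simpa using hw.1
      _ = _ := by simp
  | succ k ih =>
    have hfin : ∀ g : Letter n,
        {w : List (Letter n) | w.length = k ∧ Reduced w ∧ w.head? ≠ some g}.Finite :=
      fun _ => (List.finite_length_eq _ k).subset fun _ h => h.1
    have hsub : {w : List (Letter n) | w.length = k + 1 ∧ Reduced w ∧ w.head? ≠ some f} ⊆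
        ⋃ a ∈ Finset.univ.erase f,
          List.cons a '' {w | w.length = k ∧ Reduced w ∧ w.head? ≠ some a.inv} := by
      rintro (_ | ⟨a, t⟩) ⟨hlen, hred, hhead⟩
      · simp at hlen
      have hchain := List.isChain_cons.mp hred
      refine mem_iUnion₂.mpr ⟨a, by simpa using hhead, t, ⟨by simpa using hlen, hchain.2, ?_⟩, rfl⟩
      exact fun ht => hchain.1 _ ht rfl
    calc _ ≤ _ := ncard_le_ncard hsub
          ((Finset.univ.erase f).finite_toSet.biUnion fun a _ => (hfin a.inv).image _)
      _ ≤ ∑ a ∈ Finset.univ.erase f,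
            (List.cons a '' {w | w.length = k ∧ Reduced w ∧ w.head? ≠ some a.inv}).ncard :=
          Finset.set_ncard_biUnion_le _ _
      _ ≤ ∑ _a ∈ Finset.univ.erase f, (2 * n - 1) ^ k :=
          Finset.sum_le_sum fun a _ => (ncard_image_le (hfin a.inv)).trans (ih a.inv)
      _ = (2 * n - 1) ^ (k + 1) := by
          simp [Finset.card_erase_of_mem, pow_succ, mul_comm]

theorem ncard_hatLetter_head_eq_le {B : ℕ} (z : Letter n) :
    {a : HatLetter n B | a.1.head? = some z}.ncard ≤ (2 * n - 1) ^ (B - 1) := by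
  have hcons : ∀ a : HatLetter n B, a.1.head? = some z → a.1 = z :: a.1.tail :=
    fun _ ha => List.eq_cons_of_mem_head? ha
  refine le_trans (ncard_le_ncard_of_injOn (fun a => a.1.tail) ?_ ?_
    ((List.finite_length_eq _ (B - 1)).subset fun _ h => h.1)) (ncard_reduced_head_ne_le _ z.inv)
  · intro a ha
    have hred : Reduced (z :: a.1.tail) := hcons a ha ▸ a.2.2
    refine ⟨by simp [a.2.1], hred.tail, fun ht => ?_⟩
    exact List.isChain_cons.mp hred |>.1 _ ht rfl
  · intro a ha b hb hab
    exact Subtype.ext <| (hcons a ha).trans <| (congrArg (z :: ·) hab).trans (hcons b hb).symm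

end ReducedWords

section Automaton

variable {n B : ℕ}

theorem le_ncard_transition_diff_head_eq (hn : n ≠ 0) {lam : ℝ} {A : HatAut n B}
    (hA : IsLarge lam A) (s : HatLetter n B) (z : Letter n) :
    ⌈(lam - 1 / (2 * n)) * (2 * (n * (2 * n - 1) ^ (B - 1)))⌉₊ ≤
      (A.2 s \ {a | a.1.head? = some z}).ncard := by
  rw [Nat.ceil_le]
  have hsplit : ((A.2 s).ncard : ℝ) ≤ (A.2 s \ {a | a.1.head? = some z}).ncard +
      {a : HatLetter n B | a.1.head? = some z}.ncard := by
    exact_mod_cast ncard_le_ncard_sdiff_add_ncard _ _ (toFinite _)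
  have hhead : ({a : HatLetter n B | a.1.head? = some z}.ncard : ℝ) ≤ (2 * n - 1) ^ (B - 1) := by
    have := ncard_hatLetter_head_eq_le (B := B) z
    rw [← Nat.cast_ofNat, ← Nat.cast_mul, ← Nat.cast_one, ← Nat.cast_sub (by omega), ← Nat.cast_pow]
    exact_mod_cast this
  have hn' : (n : ℝ) ≠ 0 := by exact_mod_cast hn
  have hsub : (lam - 1 / (2 * n)) * (2 * (n * (2 * n - 1) ^ (B - 1))) =
      lam * (2 * (n * (2 * n - 1) ^ (B - 1))) - (2 * (n : ℝ) - 1) ^ (B - 1) := by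
    field_simp
  linarith [hA.2 s]

def wordOfBlocks (wh : List (HatLetter n B)) : List (Letter n) := (wh.map Subtype.val).flatten

theorem length_wordOfBlocks (wh : List (HatLetter n B)) :
    (wordOfBlocks wh).length = B * wh.length := by
  induction wh with
  | nil => exact (Nat.mul_zero B).symm
  | cons a wh ih =>
    change (a.1 ++ wordOfBlocks wh).length = B * (wh.length + 1)
    rw [List.length_append, ih, a.2.1]
    ring

theorem wordOfBlocks_injective (hB : B ≠ 0) :
    Function.Injective (wordOfBlocks (n := n) (B := B)) :=
  fun _ _ h => List.map_injective_iff.mpr Subtype.val_injective <|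
    uniquelyDecodable_setOf_length_eq hB _ _ (List.forall_mem_map.mpr fun a _ => a.2.1)
      (List.forall_mem_map.mpr fun a _ => a.2.1) h

def admissibleBlockWords (A : HatAut n B) (k : ℕ) : Set (List (HatLetter n B)) :=
  {wh | InLang A wh ∧ Reduced (wordOfBlocks wh) ∧ wh.length = k}

theorem finite_admissibleBlockWords (A : HatAut n B) (k : ℕ) :
    (admissibleBlockWords A k).Finite :=
  (List.finite_length_eq _ k).subset fun _ h => h.2.2

theorem wordOfBlocks_append_singleton (p : List (HatLetter n B)) (a : HatLetter n B) :
    wordOfBlocks (p ++ [a]) = wordOfBlocks p ++ a.1 := by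
  unfold wordOfBlocks
  refine (congrArg List.flatten (List.map_append ..)).trans ?_
  rw [List.flatten_append]
  exact congrArg _ (List.append_nil a.1)

theorem append_mem_admissibleBlockWords {A : HatAut n B} {k : ℕ} {p : List (HatLetter n B)}
    (hp : p ∈ admissibleBlockWords A k) {x : HatLetter n B} (hx : p.getLast? = some x)
    {z : Letter n} (hz : (wordOfBlocks p).getLast? = some z) {a : HatLetter n B}
    (ha : a ∈ A.2 x \ {a | a.1.head? = some z.inv}) :
    p ++ [a] ∈ admissibleBlockWords A (k + 1) := by
  obtain ⟨⟨hne, hstart, hchain⟩, hred, hlen⟩ := hp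
  refine ⟨⟨by simp, ?_, ?_⟩, ?_, by simp [hlen]⟩
  · simpa [List.head?_append_of_ne_nil _ hne] using hstart
  · refine List.isChain_append.mpr ⟨hchain, List.isChain_singleton a, ?_⟩
    simp only [hx, Option.mem_def, Option.some.injEq, List.head?_cons]
    rintro _ rfl _ rfl
    exact ha.1
  · rw [wordOfBlocks_append_singleton]
    refine List.isChain_append.mpr ⟨hred, a.2.2, ?_⟩
    simp only [hz, Option.mem_def, Option.some.injEq]
    rintro _ rfl y hy rfl
    exact ha.2 hy

theorem mul_ncard_admissibleBlockWords_le (hB : B ≠ 0) {A : HatAut n B} {m : ℕ}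
    (hm : ∀ s z, m ≤ (A.2 s \ {a | a.1.head? = some z}).ncard) {k : ℕ} (hk : k ≠ 0) :
    m * (admissibleBlockWords A k).ncard ≤ (admissibleBlockWords A (k + 1)).ncard := by
  refine mul_ncard_le_ncard_of_le_ncard_fiber (f := List.dropLast)
    (finite_admissibleBlockWords A _) (finite_admissibleBlockWords A _) fun p hp => ?_
  have hpne : p ≠ [] := by
    rintro rfl
    exact hk hp.2.2.symm
  obtain ⟨x, hx⟩ := Option.ne_none_iff_exists'.mp (mt List.getLast?_eq_none_iff.mp hpne)
  have hwne : wordOfBlocks p ≠ [] := by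
    rw [← List.length_pos_iff, length_wordOfBlocks]
    exact Nat.mul_pos (Nat.pos_of_ne_zero hB) (List.length_pos_iff.mpr hpne)
  obtain ⟨z, hz⟩ := Option.ne_none_iff_exists'.mp (mt List.getLast?_eq_none_iff.mp hwne)
  calc m ≤ (A.2 x \ {a | a.1.head? = some z.inv}).ncard := hm x z.inv
    _ ≤ _ := ncard_le_ncard_of_injOn (p ++ [·])
        (fun a ha => mem_inter (append_mem_admissibleBlockWords hp hx hz ha) (by simp))
        (fun _ _ _ _ h => List.append_cancel_left h |> List.singleton_injective)
        ((finite_admissibleBlockWords A _).subset inter_subset_left)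

theorem pow_le_ncard_admissibleBlockWords (hB : B ≠ 0) {A : HatAut n B} (hstart : A.1.Nonempty)
    {m : ℕ} (hm : ∀ s z, m ≤ (A.2 s \ {a | a.1.head? = some z}).ncard) (k : ℕ) :
    m ^ k ≤ (admissibleBlockWords A (k + 1)).ncard := by
  induction k with
  | zero =>
    obtain ⟨a, ha⟩ := hstart
    have hsingle : [a] ∈ admissibleBlockWords A 1 :=
      ⟨⟨by simp, by simpa using ha, List.isChain_singleton a⟩,
        show Reduced (a.1 ++ []) from (List.append_nil a.1).symm ▸ a.2.2, rfl⟩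
    exact (pow_zero m).trans_le <| (ncard_pos (finite_admissibleBlockWords A 1)).mpr ⟨_, hsingle⟩
  | succ k ih =>
    calc m ^ (k + 1) = m * m ^ k := pow_succ' m k
      _ ≤ m * (admissibleBlockWords A (k + 1)).ncard := Nat.mul_le_mul_left m ih
      _ ≤ _ := mul_ncard_admissibleBlockWords_le hB hm k.succ_ne_zero

theorem ncard_admissibleBlockWords_le (hB : B ≠ 0) (A : HatAut n B) (k : ℕ) :
    (admissibleBlockWords A k).ncard ≤ {w ∈ LangA A | w.length = B * k}.ncard :=
  ncard_le_ncard_of_injOn wordOfBlocks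
    (fun wh ⟨hin, hred, hlen⟩ => ⟨⟨hred, wh, hin, rfl⟩, by rw [length_wordOfBlocks, hlen]⟩)
    (wordOfBlocks_injective hB).injOn
    ((List.finite_length_eq _ (B * k)).subset fun _ h => h.2)

theorem pow_le_ncard_langA (hn : n ≠ 0) (hB : B ≠ 0) {lam : ℝ} {A : HatAut n B}
    (hA : IsLarge lam A) (k : ℕ) :
    ⌈(lam - 1 / (2 * n)) * (2 * (n * (2 * n - 1) ^ (B - 1)))⌉₊ ^ k ≤
      {w ∈ LangA A | w.length = B * (k + 1)}.ncard :=
  (pow_le_ncard_admissibleBlockWords hB hA.1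
    (le_ncard_transition_diff_head_eq hn hA) k).trans (ncard_admissibleBlockWords_le hB A _)

end Automaton

theorem rpow_one_div_mul_pow_le_ceil {lam : ℝ} (hlam : 0 ≤ lam) {n B : ℕ} (hn : 1 ≤ n)
    (hB : B ≠ 0) :
    (lam ^ ((1 : ℝ) / B) * (2 * n - 1)) ^ B ≤ ⌈lam * (2 * (n * (2 * n - 1) ^ (B - 1)))⌉₊ := by
  have hn' : (1 : ℝ) ≤ n := by exact_mod_cast hn
  have hroot : (lam ^ ((1 : ℝ) / B)) ^ B = lam := by
    rw [← Real.rpow_natCast, ← Real.rpow_mul hlam, one_div_mul_cancel (by exact_mod_cast hB),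
      Real.rpow_one]
  calc (lam ^ ((1 : ℝ) / B) * (2 * n - 1)) ^ B
        = lam * ((2 * n - 1) * (2 * n - 1) ^ (B - 1)) := by
        rw [mul_pow, hroot, ← pow_succ', Nat.sub_add_cancel (Nat.one_le_iff_ne_zero.mpr hB)]
    _ ≤ lam * (2 * n * (2 * n - 1) ^ (B - 1)) := by
        have : (0 : ℝ) ≤ 2 * n - 1 := by linarith
        gcongr
        linarith
    _ = lam * (2 * (n * (2 * n - 1) ^ (B - 1))) := by ring
    _ ≤ _ := Nat.le_ceil _

theorem exists_pos_mul_pow_le_of_pow_le {x : ℝ} (hx : 0 < x) {B m : ℕ} (hxm : x ^ B ≤ m)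
    {N : ℕ → ℝ} (hN : ∀ k, (m : ℝ) ^ k ≤ N (k + 1)) :
    ∃ c : ℝ, 0 < c ∧ ∀ L : ℕ, 1 ≤ L → c * x ^ (B * L) ≤ N L := by
  refine ⟨(x ^ B)⁻¹, by positivity, fun L hL => ?_⟩
  obtain ⟨k, rfl⟩ := Nat.exists_eq_add_of_le' hL
  calc (x ^ B)⁻¹ * x ^ (B * (k + 1)) = (x ^ B) ^ k := by
        rw [pow_mul, pow_succ, mul_comm, mul_assoc, mul_inv_cancel₀ (by positivity), mul_one]
    _ ≤ (m : ℝ) ^ k := pow_le_pow_left₀ (by positivity) hxm k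
    _ ≤ N (k + 1) := hN k

/-- For a `λ`-large b-automaton `A` over `Ŝ` with `λ' = λ - 1/(2n) > 0`, the set
`L_A` contains at least `⌈λ'·2n̂⌉^(Lh-1)` words of length `B·Lh` for each `Lh ≥ 1`;
consequently its `I₀`-growth rate is at least `(λ')^{1/B}·(2n-1)`. -/
theorem stmt_13 {n B : ℕ} (hn : 2 ≤ n) (hB : 1 ≤ B)
    (lam lam' : ℝ) (hlam' : lam' = lam - 1 / (2 * n)) (hpos : 0 < lam')
    (A : HatAut n B) (hA : IsLarge lam A) :
    (∀ Lh : ℕ, 1 ≤ Lh →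
      ⌈lam' * (2 * (n * (2 * n - 1) ^ (B - 1)))⌉₊ ^ (Lh - 1) ≤
        {w ∈ LangA A | w.length = B * Lh}.ncard) ∧
    ∃ c : ℝ, 0 < c ∧ ∀ Lh : ℕ, 1 ≤ Lh →
      c * ((lam' ^ ((1:ℝ) / B)) * (2 * n - 1)) ^ (B * Lh) ≤
        ({w ∈ LangA A | w.length = B * Lh}.ncard : ℝ) := by
  have hn' : (2 : ℝ) ≤ n := by exact_mod_cast hn
  have hbase : 0 < lam' ^ ((1 : ℝ) / B) * (2 * n - 1) :=
    mul_pos (Real.rpow_pos_of_pos hpos _) (by linarith)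
  subst hlam'
  have hcount := pow_le_ncard_langA (by omega) (by omega) hA
  refine ⟨fun Lh hLh => ?_, exists_pos_mul_pow_le_of_pow_le hbase
    (rpow_one_div_mul_pow_le_ceil hpos.le (by omega) (by omega))
    fun k => by exact_mod_cast hcount k⟩
  obtain ⟨k, rfl⟩ := Nat.exists_eq_add_of_le' hLh
  simpa using hcount k
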